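/- Let $n$ be a positive integer and let $t$ be a real number with $-1 \le t < 1$ and $t \ne 0$. Then $\sum_{k=1}^{\infty} \frac{t^k}{k^2 \binom{n+k}{k}} = \mathrm{Li}_2(t) - H_n^{(2)} + \log(1-t) \sum_{k=1}^{n} \frac{1}{k}\Big(\frac{t-1}{t}\Big)^k - \sum_{k=1}^{n} \frac{H_k + H_{n-k} - H_n}{k} \Big(\frac{t-1}{t}\Big)^k$. -/

import Mathlib

/-!
With `B(m+1, k+1) = 1 / ((k+1) C(m+k+1, k+1))` the Beta function at integers, the recurrence
`B(m+2, k+1) = B(m+1, k+1) - B(m+1, k+2)` turns `f_m(t) = ∑_k B(m+1, k+1) t^(k+1)` into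
`f_{m+1} = ((t-1)/t) f_m + 1/(m+1)` by shifting the summation index, starting from
`f_0(t) = -log(1-t)`. Similarly `(k+1)⁻¹ (B(n+1, k+1) - B(n+2, k+1)) = (n+1)⁻¹ B(n+2, k+1)`, so the
series of the theorem drops by `f_{n+1}(t) / (n+1)` from `n` to `n+1`, starting from `Li₂(t)` at
`n = 0`; the closed form obeys the same recurrence, an identity between finite harmonic sums.
This proves the formula for `|t| < 1`, and Abel's limit theorem extends it to `t = -1`.
-/

/-- The `n`-th harmonic number `H_n = ∑_{k=1}^n 1/k`, with `H_0 = 0`. -/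
noncomputable def H (n : ℕ) : ℝ := ∑ i ∈ Finset.range n, (1 : ℝ) / (i + 1)

/-- The generalized harmonic number of order 2, `H_n^{(2)} = ∑_{k=1}^n 1/k²`. -/
noncomputable def H2 (n : ℕ) : ℝ := ∑ i ∈ Finset.range n, (1 : ℝ) / (i + 1) ^ 2

/-- The dilogarithm function `Li₂(x) = ∑_{k=1}^∞ x^k/k²`. -/
noncomputable def Li2 (x : ℝ) : ℝ := ∑' k : ℕ, x ^ (k + 1) / ((k : ℝ) + 1) ^ 2

open Finset Filter Topology Real

theorem HasSum.sub_shift_mul_pow {K : Type*} [Field K] [TopologicalSpace K] [IsTopologicalRing K]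
    {c : ℕ → K} {t S : K} (ht : t ≠ 0) (h : HasSum (fun k ↦ c k * t ^ (k + 1)) S) :
    HasSum (fun k ↦ (c k - c (k + 1)) * t ^ (k + 1)) ((t - 1) / t * S + c 0) := by
  have shifted := (hasSum_nat_add_iff' 1).mpr h
  rw [sum_range_one, Nat.zero_add, pow_one] at shifted
  have value : (t - 1) / t * S + c 0 = S - t⁻¹ * (S - c 0 * t) := by field_simp; ring
  rw [value]
  refine (h.sub (shifted.mul_left t⁻¹)).congr_fun fun k ↦ ?_
  field_simp
  ring

theorem hasSum_mul_neg_one_pow_of_continuousWithinAt {c : ℕ → ℝ} {F : ℝ → ℝ} (hc : Summable c)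
    (hF : ContinuousWithinAt F (Set.Ioo (-1) 0) (-1))
    (h : ∀ t ∈ Set.Ioo (-1 : ℝ) 0, HasSum (fun k ↦ c k * t ^ (k + 1)) (F t)) :
    HasSum (fun k ↦ c k * (-1) ^ (k + 1)) (F (-1)) := by
  set f : ℕ → ℝ := fun k ↦ c k * (-1) ^ (k + 1)
  have hf : Summable f := hc.abs.of_norm_bounded fun k ↦ by simp [f]
  have abel := Real.tendsto_tsum_powerSeries_nhdsWithin_lt hf.hasSum.tendsto_sum_nat
  have near_one : ∀ᶠ x in 𝓝[<] (1 : ℝ), x ∈ Set.Ioo 0 1 := Ioo_mem_nhdsLT zero_lt_one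
  have power_series_eq : ∀ᶠ x in 𝓝[<] (1 : ℝ), ∑' k, f k * x ^ k = F (-x) / x := by
    filter_upwards [near_one] with x hx
    rw [← (h (-x) ⟨neg_lt_neg hx.2, neg_lt_zero.2 hx.1⟩).tsum_eq, ← tsum_div_const]
    refine tsum_congr fun k ↦ ?_
    rw [neg_pow, pow_succ x, eq_div_iff hx.1.ne']
    ring
  have neg_tendsto : Tendsto (fun x : ℝ ↦ -x) (𝓝[<] 1) (𝓝[Set.Ioo (-1) 0] (-1)) :=
    tendsto_nhdsWithin_iff.2 ⟨(continuous_neg.tendsto' 1 (-1) rfl).mono_left nhdsWithin_le_nhds,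
      near_one.mono fun x hx ↦ ⟨neg_lt_neg hx.2, neg_lt_zero.2 hx.1⟩⟩
  have lim : Tendsto (fun x ↦ F (-x) / x) (𝓝[<] 1) (𝓝 (F (-1) / 1)) :=
    (hF.tendsto.comp neg_tendsto).div (tendsto_nhdsWithin_of_tendsto_nhds tendsto_id) one_ne_zero
  rw [div_one] at lim
  exact tendsto_nhds_unique (abel.congr' power_series_eq) lim ▸ hf.hasSum

lemma cast_add_choose_pos (m k : ℕ) : (0 : ℝ) < ((m + k).choose k : ℝ) := by
  exact_mod_cast Nat.choose_pos (Nat.le_add_left k m)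

/-- `betaNat m k = B(m+1, k+1) = m! k! / (m+k+1)!`. -/
noncomputable def betaNat (m k : ℕ) : ℝ := (((k : ℝ) + 1) * ((m + (k + 1)).choose (k + 1) : ℝ))⁻¹

lemma betaNat_zero_left (k : ℕ) : betaNat 0 k = ((k : ℝ) + 1)⁻¹ := by
  simp [betaNat]

lemma betaNat_zero_right (m : ℕ) : betaNat m 0 = ((m : ℝ) + 1)⁻¹ := by
  simp [betaNat]

lemma mul_betaNat_succ_left (m k : ℕ) :
    ((m : ℝ) + k + 2) * betaNat (m + 1) k = (m + 1) * betaNat m k := by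
  have h := Nat.choose_mul_succ_eq (m + (k + 1)) (k + 1)
  rw [show m + (k + 1) + 1 - (k + 1) = m + 1 by omega,
    show m + (k + 1) + 1 = m + 1 + (k + 1) by omega] at h
  have h' : ((m + (k + 1)).choose (k + 1) : ℝ) * ((m : ℝ) + k + 2)
      = ((m + 1 + (k + 1)).choose (k + 1) : ℝ) * ((m : ℝ) + 1) := by
    rw [← Nat.cast_add_one, ← Nat.cast_mul, ← h]; push_cast; ring
  have := cast_add_choose_pos m (k + 1)
  have := cast_add_choose_pos (m + 1) (k + 1)
  unfold betaNat
  field_simp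
  linear_combination h'

lemma mul_betaNat_succ_right (m k : ℕ) :
    ((m : ℝ) + k + 2) * betaNat m (k + 1) = (k + 1) * betaNat m k := by
  have h := Nat.add_one_mul_choose_eq (m + (k + 1)) (k + 1)
  rw [show m + (k + 1) + 1 = m + (k + 1 + 1) by omega] at h
  have h' : ((m : ℝ) + k + 2) * ((m + (k + 1)).choose (k + 1) : ℝ)
      = ((m + (k + 1 + 1)).choose (k + 1 + 1) : ℝ) * ((k : ℝ) + 2) := by exact_mod_cast h
  have := cast_add_choose_pos m (k + 1)
  have := cast_add_choose_pos m (k + 1 + 1)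
  unfold betaNat
  push_cast
  field_simp
  linear_combination h'

lemma betaNat_succ_left (m k : ℕ) : betaNat (m + 1) k = betaNat m k - betaNat m (k + 1) := by
  have hl := mul_betaNat_succ_left m k
  have hr := mul_betaNat_succ_right m k
  have : (m : ℝ) + k + 2 ≠ 0 := by positivity
  apply mul_left_cancel₀ this
  linear_combination hl + hr

lemma succ_mul_betaNat_succ_right (m k : ℕ) :
    ((m : ℝ) + 1) * betaNat m (k + 1) = (k + 1) * betaNat (m + 1) k := by
  have hl := mul_betaNat_succ_left m k
  have hr := mul_betaNat_succ_right m k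
  have : (m : ℝ) + k + 2 ≠ 0 := by positivity
  apply mul_left_cancel₀ this
  linear_combination ((m : ℝ) + 1) * hr - ((k : ℝ) + 1) * hl

lemma betaNat_div_succ (n k : ℕ) :
    betaNat n k / ((k : ℝ) + 1) = (((k : ℝ) + 1) ^ 2 * ((n + (k + 1)).choose (k + 1) : ℝ))⁻¹ := by
  rw [betaNat, div_eq_mul_inv, ← mul_inv]
  ring

lemma betaNat_div_succ_sub (n k : ℕ) :
    betaNat n k / ((k : ℝ) + 1) - betaNat (n + 1) k / ((k : ℝ) + 1)
      = ((n : ℝ) + 1)⁻¹ * betaNat (n + 1) k := by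
  have h := succ_mul_betaNat_succ_right n k
  have hs : betaNat n k - betaNat (n + 1) k = betaNat n (k + 1) := by
    rw [betaNat_succ_left]; ring
  rw [← sub_div, hs]
  field_simp
  linear_combination h

noncomputable def betaSum (t : ℝ) (m : ℕ) : ℝ :=
  ∑ k ∈ range m, ((t - 1) / t) ^ k / ((m : ℝ) - k) - ((t - 1) / t) ^ m * log (1 - t)

lemma betaSum_zero (t : ℝ) : betaSum t 0 = -log (1 - t) := by
  simp [betaSum]

lemma betaSum_succ (t : ℝ) (m : ℕ) :
    betaSum t (m + 1) = (t - 1) / t * betaSum t m + ((m : ℝ) + 1)⁻¹ := by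
  simp only [betaSum, sum_range_succ', mul_sub, mul_sum, pow_succ]
  push_cast
  ring_nf

lemma betaSum_succ_eq_add_sum_Icc (t : ℝ) (n : ℕ) :
    betaSum t (n + 1) = ((n : ℝ) + 1)⁻¹ + ∑ k ∈ Icc 1 n, ((t - 1) / t) ^ k / ((n : ℝ) + 1 - k)
      - ((t - 1) / t) ^ (n + 1) * log (1 - t) := by
  rw [betaSum, sum_range_eq_add_Ico _ (Nat.succ_pos n), Nat.succ_eq_add_one,
    Ico_add_one_right_eq_Icc]
  push_cast
  ring

lemma hasSum_betaNat_mul_pow {t : ℝ} (ht : |t| < 1) (ht0 : t ≠ 0) (m : ℕ) :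
    HasSum (fun k ↦ betaNat m k * t ^ (k + 1)) (betaSum t m) := by
  induction m with
  | zero =>
    simpa [betaNat_zero_left, betaSum_zero, div_eq_inv_mul] using
      Real.hasSum_pow_div_log_of_abs_lt_one ht
  | succ m ih =>
    simpa only [betaNat_succ_left, betaSum_succ, betaNat_zero_right] using ih.sub_shift_mul_pow ht0

lemma H_succ (n : ℕ) : H (n + 1) = H n + ((n : ℝ) + 1)⁻¹ := by
  simp [H, sum_range_succ]

lemma H2_succ (n : ℕ) : H2 (n + 1) = H2 n + ((n : ℝ) + 1)⁻¹ ^ 2 := by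
  simp [H2, sum_range_succ]

lemma harmonic_weight_succ {n k : ℕ} (hk1 : 1 ≤ k) (hkn : k ≤ n) :
    (H k + H (n + 1 - k) - H (n + 1)) / k
      = (H k + H (n - k) - H n) / k + (((n : ℝ) + 1) * ((n : ℝ) + 1 - k))⁻¹ := by
  rw [show n + 1 - k = n - k + 1 by omega, H_succ, H_succ, Nat.cast_sub hkn]
  have : (1 : ℝ) ≤ k := by exact_mod_cast hk1
  have : (k : ℝ) ≤ n := by exact_mod_cast hkn
  have : (n : ℝ) + 1 - k ≠ 0 := by linarith
  have : (n : ℝ) - k + 1 ≠ 0 := by linarith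
  field_simp
  ring

lemma sum_harmonic_weight_succ (q : ℝ) (n : ℕ) :
    ∑ k ∈ Icc 1 (n + 1), (H k + H (n + 1 - k) - H (n + 1)) / k * q ^ k
      = ∑ k ∈ Icc 1 n, (H k + H (n - k) - H n) / k * q ^ k
        + ((n : ℝ) + 1)⁻¹ * ∑ k ∈ Icc 1 n, q ^ k / ((n : ℝ) + 1 - k) := by
  rw [sum_Icc_succ_top (by omega), Nat.sub_self, mul_sum, ← sum_add_distrib]
  have last : (H (n + 1) + H 0 - H (n + 1)) / ((n + 1 : ℕ) : ℝ) * q ^ (n + 1) = 0 := by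
    simp [H]
  rw [last, add_zero]
  refine sum_congr rfl fun k hk ↦ ?_
  obtain ⟨hk1, hkn⟩ := mem_Icc.mp hk
  rw [harmonic_weight_succ hk1 hkn]
  field_simp

lemma summable_inv_succ_sq : Summable fun k : ℕ ↦ (((k : ℝ) + 1) ^ 2)⁻¹ := by
  simpa using (summable_nat_add_iff 1).mpr (Real.summable_nat_pow_inv.mpr one_lt_two)

lemma summable_betaNat_div_succ (n : ℕ) : Summable fun k ↦ betaNat n k / ((k : ℝ) + 1) := by
  refine summable_inv_succ_sq.of_nonneg_of_le (fun k ↦ by rw [betaNat_div_succ]; positivity)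
    fun k ↦ ?_
  rw [betaNat_div_succ]
  have : (1 : ℝ) ≤ ((n + (k + 1)).choose (k + 1) : ℝ) :=
    Nat.one_le_cast.2 (Nat.choose_pos (by omega))
  gcongr
  exact le_mul_of_one_le_right (by positivity) this

lemma norm_pow_succ_div_sq_le {t : ℝ} (ht : |t| ≤ 1) (k : ℕ) :
    ‖t ^ (k + 1) / ((k : ℝ) + 1) ^ 2‖ ≤ (((k : ℝ) + 1) ^ 2)⁻¹ := by
  rw [norm_div, norm_pow, norm_pow, Real.norm_eq_abs, Real.norm_eq_abs,
    abs_of_pos (by positivity : (0 : ℝ) < k + 1), div_eq_mul_inv]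
  exact mul_le_of_le_one_left (by positivity) (pow_le_one₀ (abs_nonneg t) ht)

lemma hasSum_Li2 {t : ℝ} (ht : |t| ≤ 1) :
    HasSum (fun k : ℕ ↦ t ^ (k + 1) / ((k : ℝ) + 1) ^ 2) (Li2 t) :=
  (summable_inv_succ_sq.of_norm_bounded (norm_pow_succ_div_sq_le ht)).hasSum

lemma continuousOn_Li2 : ContinuousOn Li2 (Set.Icc (-1) 1) :=
  continuousOn_tsum (fun k ↦ by fun_prop) summable_inv_succ_sq
    fun k t ht ↦ norm_pow_succ_div_sq_le (abs_le.mpr ht) k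

noncomputable def seriesValue (t : ℝ) (n : ℕ) : ℝ :=
  Li2 t - H2 n + log (1 - t) * (∑ k ∈ Icc 1 n, 1 / (k : ℝ) * ((t - 1) / t) ^ k) -
    ∑ k ∈ Icc 1 n, (H k + H (n - k) - H n) / (k : ℝ) * ((t - 1) / t) ^ k

lemma seriesValue_zero (t : ℝ) : seriesValue t 0 = Li2 t := by
  simp [seriesValue, H2]

lemma seriesValue_succ (t : ℝ) (n : ℕ) :
    seriesValue t (n + 1) = seriesValue t n - ((n : ℝ) + 1)⁻¹ * betaSum t (n + 1) := by
  rw [seriesValue, seriesValue, sum_harmonic_weight_succ, H2_succ, betaSum_succ_eq_add_sum_Icc,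
    sum_Icc_succ_top (by omega)]
  push_cast
  ring

lemma hasSum_seriesValue {t : ℝ} (ht : |t| < 1) (ht0 : t ≠ 0) (n : ℕ) :
    HasSum (fun k ↦ betaNat n k / ((k : ℝ) + 1) * t ^ (k + 1)) (seriesValue t n) := by
  induction n with
  | zero =>
    rw [seriesValue_zero]
    refine (hasSum_Li2 ht.le).congr_fun fun k ↦ ?_
    rw [betaNat_zero_left]
    field_simp
  | succ n ih =>
    rw [seriesValue_succ]
    refine (ih.sub ((hasSum_betaNat_mul_pow ht ht0 (n + 1)).mul_left ((n : ℝ) + 1)⁻¹)).congr_fun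
      fun k ↦ ?_
    linear_combination -(t ^ (k + 1)) * betaNat_div_succ_sub n k

lemma continuousOn_seriesValue (n : ℕ) : ContinuousOn (seriesValue · n) (Set.Ico (-1) 0) := by
  have hLi2 : ContinuousOn Li2 (Set.Ico (-1) 0) :=
    continuousOn_Li2.mono (Set.Ico_subset_Icc_self.trans (Set.Icc_subset_Icc_right zero_le_one))
  have hlog : ContinuousOn (fun t : ℝ ↦ log (1 - t)) (Set.Ico (-1) 0) :=
    ContinuousOn.log (by fun_prop) fun t ht ↦ (sub_pos.2 (ht.2.trans zero_lt_one)).ne'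
  have hq : ContinuousOn (fun t : ℝ ↦ (t - 1) / t) (Set.Ico (-1) 0) :=
    ContinuousOn.div (by fun_prop) (by fun_prop) fun t ht ↦ ht.2.ne
  unfold seriesValue
  fun_prop

theorem binom_series_sq_general (n : ℕ) (t : ℝ) (ht0 : -1 ≤ t) (ht1 : t < 1)
    (ht : t ≠ 0) :
    ∑' k : ℕ, t ^ (k + 1) / (((k : ℝ) + 1) ^ 2 * (Nat.choose (n + (k + 1)) (k + 1) : ℝ)) =
      Li2 t - H2 n +
        Real.log (1 - t) * (∑ k ∈ Finset.Icc 1 n, 1 / (k : ℝ) * ((t - 1) / t) ^ k) -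
        ∑ k ∈ Finset.Icc 1 n, (H k + H (n - k) - H n) / (k : ℝ) * ((t - 1) / t) ^ k := by
  have key : HasSum (fun k ↦ betaNat n k / ((k : ℝ) + 1) * t ^ (k + 1)) (seriesValue t n) := by
    rcases ht0.eq_or_lt with rfl | hlt
    · have hF : ContinuousWithinAt (seriesValue · n) (Set.Ioo (-1) 0) (-1) :=
        ((continuousOn_seriesValue n).continuousWithinAt ⟨le_rfl, by norm_num⟩).mono
          Set.Ioo_subset_Ico_self
      exact hasSum_mul_neg_one_pow_of_continuousWithinAt (summable_betaNat_div_succ n) hF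
        fun s hs ↦ hasSum_seriesValue (abs_lt.2 ⟨hs.1, hs.2.trans zero_lt_one⟩) hs.2.ne n
    · exact hasSum_seriesValue (abs_lt.2 ⟨hlt, ht1⟩) ht n
  refine (key.congr_fun fun k ↦ ?_).tsum_eq
  rw [betaNat_div_succ, div_eq_inv_mul]

/-- For `n` a positive integer and real `t` with `-1 ≤ t < 1`, `t ≠ 0`,
`∑_{k=1}^∞ t^k/(k² C(n+k,k)) = Li₂(t) - H_n^{(2)}
  + log(1-t) ∑_{k=1}^n (1/k)((t-1)/t)^k - ∑_{k=1}^n ((H_k+H_{n-k}-H_n)/k)((t-1)/t)^k`. -/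
theorem binom_series_sq (n : ℕ) (hn : 0 < n) (t : ℝ) (ht0 : -1 ≤ t) (ht1 : t < 1)
    (ht : t ≠ 0) :
    ∑' k : ℕ, t ^ (k + 1) / (((k : ℝ) + 1) ^ 2 * (Nat.choose (n + (k + 1)) (k + 1) : ℝ)) =
      Li2 t - H2 n +
        Real.log (1 - t) * (∑ k ∈ Finset.Icc 1 n, 1 / (k : ℝ) * ((t - 1) / t) ^ k) -
        ∑ k ∈ Finset.Icc 1 n, (H k + H (n - k) - H n) / (k : ℝ) * ((t - 1) / t) ^ k :=
  binom_series_sq_general n t ht0 ht1 ht
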